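/- arXiv:math/0410467 — 4 statements merged into one kernel-verified Lean document; each statement's English description precedes it below -/
import Mathlib

section
/- For all real parameters α > 0, γ > 0 and every k with 0 < k < 3(α + γ), the function F(θ) = α(1−θ) − γθ − k(1−θ)²θ is strictly decreasing on the interval [0,1] and has exactly one zero in the open interval (0,1). (This is the regime of Figure 1 where the NO-reduction model has a unique steady state.) -/
/-- For all real parameters `α > 0`, `γ > 0` and every `k` with `0 < k < 3(α + γ)`,
the function `F(θ) = α(1−θ) − γθ − k(1−θ)²θ` is strictly decreasing on `[0,1]`
and has exactly one zero in the open interval `(0,1)`. -/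
theorem stmt_0 (α γ k : ℝ) (hα : 0 < α) (hγ : 0 < γ) (hk : 0 < k)
    (hk' : k < 3 * (α + γ)) :
    StrictAntiOn (fun θ : ℝ => α * (1 - θ) - γ * θ - k * (1 - θ) ^ 2 * θ)
      (Set.Icc 0 1) ∧
    ∃! θ : ℝ, θ ∈ Set.Ioo (0 : ℝ) 1 ∧
      α * (1 - θ) - γ * θ - k * (1 - θ) ^ 2 * θ = 0 := by
  set F : ℝ → ℝ := fun θ : ℝ => α * (1 - θ) - γ * θ - k * (1 - θ) ^ 2 * θ with hF
  have hanti : StrictAntiOn F (Set.Icc 0 1) := by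
    intro x _ y _ hxy
    simp only [hF]
    have hq : 3 * (x ^ 2 + x * y + y ^ 2 - 2 * (x + y) + 1) + 1 ≥ 0 := by
      nlinarith [sq_nonneg (x - y), sq_nonneg (x + y - 4/3)]
    nlinarith [mul_pos hk (sub_pos.mpr hxy), sq_nonneg (x - y)]
  refine ⟨hanti, ?_⟩
  have hcont : ContinuousOn F (Set.Icc (0:ℝ) 1) := by
    apply Continuous.continuousOn; fun_prop
  have hF0 : F 0 = α := by simp [hF]
  have hF1 : F 1 = -γ := by simp [hF]
  have hsub : Set.Ioo (F 1) (F 0) ⊆ F '' Set.Ioo 0 1 :=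
    intermediate_value_Ioo' (by norm_num) hcont
  have h0 : (0:ℝ) ∈ Set.Ioo (F 1) (F 0) := by
    rw [hF0, hF1]; exact ⟨by linarith, hα⟩
  obtain ⟨θ, hθ, hθ0⟩ := hsub h0
  refine ⟨θ, ⟨hθ, hθ0⟩, ?_⟩
  rintro θ' ⟨hθ', hθ'0⟩
  exact hanti.injOn (Set.mem_Icc_of_Ioo hθ') (Set.mem_Icc_of_Ioo hθ) (hθ'0.trans hθ0.symm)
end

section
/- For all parameters α, β, γ, k_r > 0, the closed triangle Δ = {(a,b) ∈ ℝ² : a ≥ 0, b ≥ 0, a + b ≤ 1} is positively invariant for the CO-oxidation system: every solution (θ_A, θ_B) : [0,∞) → ℝ² of θ_A′ = α(1−θ_A−θ_B) − γθ_A − 4k_r θ_A θ_B, θ_B′ = 2β(1−θ_A−θ_B)² − 4k_r θ_A θ_B with (θ_A(0), θ_B(0)) ∈ Δ satisfies (θ_A(t), θ_B(t)) ∈ Δ for all t ≥ 0. -/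
open Set Real

lemma maxsq_hasDerivAt (x : ℝ) :
    HasDerivAt (fun y : ℝ => max y 0 ^ 2) (2 * max x 0) x := by
  rcases lt_trichotomy x 0 with hx | hx | hx
  · have h : (fun y : ℝ => max y 0 ^ 2) =ᶠ[nhds x] fun _ => (0:ℝ) := by
      filter_upwards [eventually_lt_nhds hx] with y hy
      simp [max_eq_right hy.le]
    have : HasDerivAt (fun _ : ℝ => (0:ℝ)) 0 x := hasDerivAt_const x 0
    simpa [max_eq_right hx.le] using this.congr_of_eventuallyEq h
  · subst hx
    have : HasDerivAt (fun y : ℝ => max y 0 ^ 2) 0 0 := by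
      rw [hasDerivAt_iff_isLittleO]
      simp only [smul_eq_mul, mul_zero, sub_zero]
      have : (fun y : ℝ => max y 0 ^ 2 - max 0 0 ^ 2) = fun y : ℝ => max y 0 ^ 2 := by
        simp
      rw [this]
      rw [Asymptotics.isLittleO_iff]
      intro c hc
      filter_upwards [Metric.ball_mem_nhds (0:ℝ) hc] with y hy
      simp only [Metric.mem_ball, Real.dist_eq, sub_zero] at hy
      have h1 : |max y 0| ≤ |y| := by
        rcases le_or_gt y 0 with h | h
        · simp [max_eq_right h]
        · simp [max_eq_left h.le]
      have : ‖max y 0 ^ 2‖ ≤ |y| * |y| := by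
        rw [Real.norm_eq_abs, abs_pow, pow_two]
        exact mul_le_mul h1 h1 (abs_nonneg _) (abs_nonneg _)
      calc ‖max y 0 ^ 2‖ ≤ |y| * |y| := this
        _ ≤ c * ‖y‖ := by
          rw [Real.norm_eq_abs]
          exact mul_le_mul_of_nonneg_right hy.le (abs_nonneg _)
    simpa using this
  · have h : (fun y : ℝ => max y 0 ^ 2) =ᶠ[nhds x] fun y => y ^ 2 := by
      filter_upwards [eventually_gt_nhds hx] with y hy
      simp [max_eq_left hy.le]
    have : HasDerivAt (fun y : ℝ => y ^ 2) (2 * x) x := by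
      simpa using (hasDerivAt_pow 2 x)
    simpa [max_eq_left hx.le] using this.congr_of_eventuallyEq h
lemma key_ineq (α β γ kr M u v : ℝ) (hα : 0 < α) (hβ : 0 < β) (hγ : 0 < γ)
    (hkr : 0 < kr) (hu : |u| ≤ M) (hv : |v| ≤ M) :
    2 * max (-u) 0 * (-(α * (1 - u - v) - γ * u - 4 * kr * u * v)) +
      2 * max (-v) 0 * (-(2 * β * (1 - u - v) ^ 2 - 4 * kr * u * v)) +
      2 * max (u + v - 1) 0 *
        ((α * (1 - u - v) - γ * u - 4 * kr * u * v) +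
          (2 * β * (1 - u - v) ^ 2 - 4 * kr * u * v)) ≤
    (α + γ + 4 * β * (1 + 2 * M) + 16 * kr * M) *
      (max (-u) 0 ^ 2 + max (-v) 0 ^ 2 + max (u + v - 1) 0 ^ 2) := by
  set p := max (-u) 0 with hp
  set q := max (-v) 0 with hq
  set r := max (u + v - 1) 0 with hr
  have hM : 0 ≤ M := le_trans (abs_nonneg u) hu
  have hp0 : 0 ≤ p := le_max_right _ _
  have hq0 : 0 ≤ q := le_max_right _ _
  have hr0 : 0 ≤ r := le_max_right _ _
  have hpu : -u ≤ p := le_max_left _ _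
  have hqv : -v ≤ q := le_max_left _ _
  have hrs : u + v - 1 ≤ r := le_max_left _ _
  have hpI : p * u = -p ^ 2 := by
    rcases le_or_gt 0 u with h | h
    · rw [hp, max_eq_right (neg_nonpos.mpr h)]; ring
    · rw [hp, max_eq_left (neg_nonneg.mpr h.le)]; ring
  have hqI : q * v = -q ^ 2 := by
    rcases le_or_gt 0 v with h | h
    · rw [hq, max_eq_right (neg_nonpos.mpr h)]; ring
    · rw [hq, max_eq_left (neg_nonneg.mpr h.le)]; ring
  have hrI : r * (1 - u - v) = -r ^ 2 := by
    rcases le_or_gt (u + v - 1) 0 with h | h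
    · rw [hr, max_eq_right h]; ring
    · rw [hr, max_eq_left h.le]; ring
  have huM : u ≤ M := le_trans (le_abs_self u) hu
  have hvM : v ≤ M := le_trans (le_abs_self v) hv
  have huM' : -M ≤ u := neg_le_of_neg_le (le_trans (neg_le_abs u) hu)
  have hvM' : -M ≤ v := neg_le_of_neg_le (le_trans (neg_le_abs v) hv)
  have huv : -(u * v) ≤ p * M + q * M := by
    rcases le_or_gt 0 u with h | h
    · rcases le_or_gt 0 v with h' | h'
      · nlinarith
      · have hq' : q = -v := max_eq_left (neg_nonneg.mpr h'.le)
        nlinarith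
    · have hps : p = -u := max_eq_left (neg_nonneg.mpr h.le)
      rcases le_or_gt 0 v with h' | h'
      · nlinarith
      · have hq' : q = -v := max_eq_left (neg_nonneg.mpr h'.le)
        nlinarith
  have key1 : p * u * v = -p ^ 2 * v := by
    have h : p * u * v = (p * u) * v := by ring
    rw [h, hpI]
  have key3 : r * (1 - u - v) ^ 2 = -r ^ 2 * (1 - u - v) := by
    have h : r * (1 - u - v) ^ 2 = (r * (1 - u - v)) * (1 - u - v) := by ring
    rw [h, hrI]
  have key2 : q * (u * v) = -q ^ 2 * u := by
    have h : q * (u * v) = (q * v) * u := by ring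
    rw [h, hqI]
  have T1 : 2 * p * (-(α * (1 - u - v) - γ * u - 4 * kr * u * v)) ≤
      α * (p ^ 2 + r ^ 2) + 8 * kr * M * p ^ 2 := by
    have e : 2 * p * (-(α * (1 - u - v) - γ * u - 4 * kr * u * v)) =
        2 * α * (p * (-(1 - u - v))) - 2 * γ * p ^ 2 - 8 * kr * (p ^ 2 * v) := by
      linear_combination (2 * γ) * hpI + (8 * kr) * key1
    rw [e]
    have b1 : α * (p * (-(1 - u - v))) ≤ α * (p * r) :=
      mul_le_mul_of_nonneg_left
        (mul_le_mul_of_nonneg_left (by linarith) hp0) hα.le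
    linarith [b1, mul_nonneg hα.le (sq_nonneg (p - r)),
      mul_nonneg hkr.le (mul_nonneg (sq_nonneg p) (show 0 ≤ M + v by linarith)),
      mul_nonneg hγ.le (sq_nonneg p)]
  have T2 : 2 * q * (-(2 * β * (1 - u - v) ^ 2 - 4 * kr * u * v)) ≤
      8 * kr * M * q ^ 2 := by
    have e : 2 * q * (-(2 * β * (1 - u - v) ^ 2 - 4 * kr * u * v)) =
        -4 * β * (q * (1 - u - v) ^ 2) - 8 * kr * (q ^ 2 * u) := by
      linear_combination (8 * kr) * key2
    rw [e]
    linarith [mul_nonneg hβ.le (mul_nonneg hq0 (sq_nonneg (1 - u - v))),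
      mul_nonneg hkr.le (mul_nonneg (sq_nonneg q) (show 0 ≤ M + u by linarith))]
  have T3 : 2 * r * ((α * (1 - u - v) - γ * u - 4 * kr * u * v) +
      (2 * β * (1 - u - v) ^ 2 - 4 * kr * u * v)) ≤
      γ * (p ^ 2 + r ^ 2) + 4 * β * (1 + 2 * M) * r ^ 2 +
        8 * kr * M * (2 * r ^ 2 + p ^ 2 + q ^ 2) := by
    have e : 2 * r * ((α * (1 - u - v) - γ * u - 4 * kr * u * v) +
        (2 * β * (1 - u - v) ^ 2 - 4 * kr * u * v)) =
        -2 * α * r ^ 2 + 4 * β * (-r ^ 2 * (1 - u - v)) + 2 * γ * (r * (-u)) +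
          16 * kr * (r * (-(u * v))) := by
      linear_combination (2 * α) * hrI + (4 * β) * key3
    rw [e]
    have b2 : γ * (r * (-u)) ≤ γ * (r * p) :=
      mul_le_mul_of_nonneg_left (mul_le_mul_of_nonneg_left hpu hr0) hγ.le
    have b3 : kr * (r * (-(u * v))) ≤ kr * (r * (p * M + q * M)) :=
      mul_le_mul_of_nonneg_left (mul_le_mul_of_nonneg_left huv hr0) hkr.le
    linarith [b2, b3, mul_nonneg hα.le (sq_nonneg r),
      mul_nonneg hβ.le (mul_nonneg (sq_nonneg r) (show 0 ≤ 2 + 2 * M - u - v by linarith)),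
      mul_nonneg hγ.le (sq_nonneg (r - p)),
      mul_nonneg (mul_nonneg hkr.le hM) (sq_nonneg (r - p)),
      mul_nonneg (mul_nonneg hkr.le hM) (sq_nonneg (r - q))]
  linarith [T1, T2, T3,
    mul_nonneg hβ.le (mul_nonneg (show 0 ≤ 1 + 2 * M by linarith) (sq_nonneg p)),
    mul_nonneg hβ.le (mul_nonneg (show 0 ≤ 1 + 2 * M by linarith) (sq_nonneg q)),
    mul_nonneg hα.le (sq_nonneg q), mul_nonneg hγ.le (sq_nonneg q)]

/-- For all parameters `α, β, γ, k_r > 0`, the closed triangle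
`Δ = {(a,b) : a ≥ 0, b ≥ 0, a + b ≤ 1}` is positively invariant for the
mean-field CO-oxidation system. -/
theorem stmt_7 (α β γ kr : ℝ) (hα : 0 < α) (hβ : 0 < β) (hγ : 0 < γ)
    (hkr : 0 < kr) (θA θB : ℝ → ℝ)
    (hA : ∀ t ∈ Set.Ici (0 : ℝ), HasDerivAt θA
      (α * (1 - θA t - θB t) - γ * θA t - 4 * kr * θA t * θB t) t)
    (hB : ∀ t ∈ Set.Ici (0 : ℝ), HasDerivAt θB
      (2 * β * (1 - θA t - θB t) ^ 2 - 4 * kr * θA t * θB t) t)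
    (h0 : 0 ≤ θA 0 ∧ 0 ≤ θB 0 ∧ θA 0 + θB 0 ≤ 1) :
    ∀ t ≥ (0 : ℝ), 0 ≤ θA t ∧ 0 ≤ θB t ∧ θA t + θB t ≤ 1 := by
  intro t ht
  -- continuity of the solution on [0, t]
  have hAc : ContinuousOn θA (Icc 0 t) := fun s hs =>
    ((hA s hs.1).continuousAt).continuousWithinAt
  have hBc : ContinuousOn θB (Icc 0 t) := fun s hs =>
    ((hB s hs.1).continuousAt).continuousWithinAt
  -- a priori bound on [0, t]
  obtain ⟨M, hMb⟩ := isCompact_Icc.exists_bound_of_continuousOn (hAc.prodMk hBc)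
  have hMA : ∀ s ∈ Icc (0:ℝ) t, |θA s| ≤ M := fun s hs =>
    le_trans (norm_fst_le (θA s, θB s)) (hMb s hs)
  have hMB : ∀ s ∈ Icc (0:ℝ) t, |θB s| ≤ M := fun s hs =>
    le_trans (norm_snd_le (θA s, θB s)) (hMb s hs)
  set K : ℝ := α + γ + 4 * β * (1 + 2 * M) + 16 * kr * M with hK
  set φ : ℝ → ℝ := fun s =>
    max (-(θA s)) 0 ^ 2 + max (-(θB s)) 0 ^ 2 + max (θA s + θB s - 1) 0 ^ 2 with hφ
  set φ' : ℝ → ℝ := fun s =>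
    2 * max (-(θA s)) 0 *
        (-(α * (1 - θA s - θB s) - γ * θA s - 4 * kr * θA s * θB s)) +
      2 * max (-(θB s)) 0 *
        (-(2 * β * (1 - θA s - θB s) ^ 2 - 4 * kr * θA s * θB s)) +
      2 * max (θA s + θB s - 1) 0 *
        ((α * (1 - θA s - θB s) - γ * θA s - 4 * kr * θA s * θB s) +
          (2 * β * (1 - θA s - θB s) ^ 2 - 4 * kr * θA s * θB s)) with hφ'
  have hφd : ∀ s ∈ Ici (0:ℝ), HasDerivAt φ (φ' s) s := by
    intro s hs
    have h1 : HasDerivAt (fun x => max (-(θA x)) 0 ^ 2)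
        (2 * max (-(θA s)) 0 *
          (-(α * (1 - θA s - θB s) - γ * θA s - 4 * kr * θA s * θB s))) s := by
      have := (maxsq_hasDerivAt (-(θA s))).comp s (hA s hs).neg
      simpa [Function.comp_def] using this
    have h2 : HasDerivAt (fun x => max (-(θB x)) 0 ^ 2)
        (2 * max (-(θB s)) 0 *
          (-(2 * β * (1 - θA s - θB s) ^ 2 - 4 * kr * θA s * θB s))) s := by
      have := (maxsq_hasDerivAt (-(θB s))).comp s (hB s hs).neg
      simpa [Function.comp_def] using this
    have h3 : HasDerivAt (fun x => max (θA x + θB x - 1) 0 ^ 2)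
        (2 * max (θA s + θB s - 1) 0 *
          ((α * (1 - θA s - θB s) - γ * θA s - 4 * kr * θA s * θB s) +
            (2 * β * (1 - θA s - θB s) ^ 2 - 4 * kr * θA s * θB s))) s := by
      have := (maxsq_hasDerivAt (θA s + θB s - 1)).comp s
        (((hA s hs).add (hB s hs)).sub_const 1)
      simpa [Function.comp_def] using this
    exact (h1.add h2).add h3
  have hφc : ContinuousOn φ (Icc 0 t) := fun s hs =>
    ((hφd s hs.1).continuousAt).continuousWithinAt
  have ha : φ 0 ≤ 0 := by
    obtain ⟨h1, h2, h3⟩ := h0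
    simp only [hφ]
    rw [max_eq_right (by linarith : -(θA 0) ≤ 0),
      max_eq_right (by linarith : -(θB 0) ≤ 0),
      max_eq_right (by linarith : θA 0 + θB 0 - 1 ≤ 0)]
    norm_num
  have bound : ∀ x ∈ Ico (0:ℝ) t, φ' x ≤ K * φ x + 0 := by
    intro x hx
    rw [add_zero]
    exact key_ineq α β γ kr M (θA x) (θB x) hα hβ hγ hkr
      (hMA x ⟨hx.1, hx.2.le⟩) (hMB x ⟨hx.1, hx.2.le⟩)
  have hgron := le_gronwallBound_of_liminf_deriv_right_le hφc
    (fun x hx r hr => ((hφd x hx.1).hasDerivWithinAt).liminf_right_slope_le hr)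
    ha bound t ⟨ht, le_refl t⟩
  rw [sub_zero, gronwallBound_ε0_δ0] at hgron
  -- conclude
  have hp : -(θA t) ≤ max (-(θA t)) 0 := le_max_left _ _
  have hq : -(θB t) ≤ max (-(θB t)) 0 := le_max_left _ _
  have hr : θA t + θB t - 1 ≤ max (θA t + θB t - 1) 0 := le_max_left _ _
  have hp0 : 0 ≤ max (-(θA t)) 0 := le_max_right _ _
  have hq0 : 0 ≤ max (-(θB t)) 0 := le_max_right _ _
  have hr0 : 0 ≤ max (θA t + θB t - 1) 0 := le_max_right _ _
  have hφt : max (-(θA t)) 0 ^ 2 + max (-(θB t)) 0 ^ 2 +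
      max (θA t + θB t - 1) 0 ^ 2 ≤ 0 := hgron
  refine ⟨?_, ?_, ?_⟩
  · nlinarith [sq_nonneg (max (-(θB t)) 0), sq_nonneg (max (θA t + θB t - 1) 0)]
  · nlinarith [sq_nonneg (max (-(θA t)) 0), sq_nonneg (max (θA t + θB t - 1) 0)]
  · nlinarith [sq_nonneg (max (-(θA t)) 0), sq_nonneg (max (-(θB t)) 0)]
end

section
/- For the parameter values α = 1.6, γ = 0.04, k_r = 1, β = 3.5, the CO-oxidation system has at least three distinct equilibria in the open triangle {(a,b) : a > 0, b > 0, a + b < 1}; more precisely, there exist equilibria (a,b) with max(|a − 0.13944|, |b − 0.63553|) ≤ 10⁻³, with max(|a − 0.67526|, |b − 0.11452|) ≤ 10⁻³, and with max(|a − 0.97101|, |b − 0.00137|) ≤ 10⁻³. (These are the three coexisting steady states of Table 4.) -/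
/-- IVT helper: the cubic `122500 s³ − 56700 s² + 7267 s − 160` has a root in `[p,q]`
whenever `0` lies between its values at the endpoints. -/
lemma cubic_root (p q : ℝ) (hpq : p ≤ q)
    (h : (0:ℝ) ∈ Set.Icc (122500*p^3 - 56700*p^2 + 7267*p - 160)
        (122500*q^3 - 56700*q^2 + 7267*q - 160)) :
    ∃ s, p ≤ s ∧ s ≤ q ∧ 122500*s^3 - 56700*s^2 + 7267*s - 160 = 0 := by
  have hc : ContinuousOn (fun s : ℝ => 122500*s^3 - 56700*s^2 + 7267*s - 160) (Set.Icc p q) :=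
    (Continuous.continuousOn (by continuity))
  obtain ⟨s, hs, hfs⟩ := intermediate_value_Icc hpq hc h
  exact ⟨s, hs.1, hs.2, hfs⟩

lemma cubic_root' (p q : ℝ) (hpq : p ≤ q)
    (h : (0:ℝ) ∈ Set.Icc (122500*q^3 - 56700*q^2 + 7267*q - 160)
        (122500*p^3 - 56700*p^2 + 7267*p - 160)) :
    ∃ s, p ≤ s ∧ s ≤ q ∧ 122500*s^3 - 56700*s^2 + 7267*s - 160 = 0 := by
  have hc : ContinuousOn (fun s : ℝ => 122500*s^3 - 56700*s^2 + 7267*s - 160) (Set.Icc p q) :=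
    (Continuous.continuousOn (by continuity))
  obtain ⟨s, hs, hfs⟩ := intermediate_value_Icc' hpq hc h
  exact ⟨s, hs.1, hs.2, hfs⟩

set_option maxHeartbeats 1000000 in
/-- For `α = 1.6`, `γ = 0.04`, `k_r = 1`, `β = 3.5`, the CO-oxidation system has
at least three distinct equilibria in the open triangle, located within `1/1000`
(in the max norm) of the three steady states of Table 4. -/
theorem stmt_9 :
    ∃ a₁ b₁ a₂ b₂ a₃ b₃ : ℝ,
      (0 < a₁ ∧ 0 < b₁ ∧ a₁ + b₁ < 1 ∧
        (1.6 : ℝ) * (1 - a₁ - b₁) - 0.04 * a₁ - 4 * 1 * a₁ * b₁ = 0 ∧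
        (2 : ℝ) * 3.5 * (1 - a₁ - b₁) ^ 2 - 4 * 1 * a₁ * b₁ = 0 ∧
        max |a₁ - 0.13944| |b₁ - 0.63553| ≤ 1/1000) ∧
      (0 < a₂ ∧ 0 < b₂ ∧ a₂ + b₂ < 1 ∧
        (1.6 : ℝ) * (1 - a₂ - b₂) - 0.04 * a₂ - 4 * 1 * a₂ * b₂ = 0 ∧
        (2 : ℝ) * 3.5 * (1 - a₂ - b₂) ^ 2 - 4 * 1 * a₂ * b₂ = 0 ∧
        max |a₂ - 0.67526| |b₂ - 0.11452| ≤ 1/1000) ∧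
      (0 < a₃ ∧ 0 < b₃ ∧ a₃ + b₃ < 1 ∧
        (1.6 : ℝ) * (1 - a₃ - b₃) - 0.04 * a₃ - 4 * 1 * a₃ * b₃ = 0 ∧
        (2 : ℝ) * 3.5 * (1 - a₃ - b₃) ^ 2 - 4 * 1 * a₃ * b₃ = 0 ∧
        max |a₃ - 0.97101| |b₃ - 0.00137| ≤ 1/1000) ∧
      (a₁, b₁) ≠ (a₂, b₂) ∧ (a₁, b₁) ≠ (a₃, b₃) ∧ (a₂, b₂) ≠ (a₃, b₃) := by
  -- root near s = 0.2250306  (first equilibrium)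
  obtain ⟨s₁, hp₁, hq₁, hf₁⟩ := cubic_root (450061/2000000) (1125153/5000000)
    (by norm_num) (by constructor <;> norm_num)
  -- root near s = 0.2102159  (second equilibrium, cubic decreasing here)
  obtain ⟨s₂, hp₂, hq₂, hf₂⟩ := cubic_root' (1051079/5000000) (2102159/10000000)
    (by norm_num) (by constructor <;> norm_num)
  -- root near s = 0.0276107  (third equilibrium)
  obtain ⟨s₃, hp₃, hq₃, hf₃⟩ := cubic_root (138053/5000000) (276107/10000000)
    (by norm_num) (by constructor <;> norm_num)
  have ha1 : 40*s₁ - 175*s₁^2 < 0.15 := by nlinarith [mul_nonneg (sub_nonneg.2 hp₁) (sub_nonneg.2 hq₁)]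
  have ha2 : 0.6 < 40*s₂ - 175*s₂^2 := by nlinarith [mul_nonneg (sub_nonneg.2 hp₂) (sub_nonneg.2 hq₂)]
  have ha2' : 40*s₂ - 175*s₂^2 < 0.9 := by nlinarith [mul_nonneg (sub_nonneg.2 hp₂) (sub_nonneg.2 hq₂)]
  have ha3 : 0.9 < 40*s₃ - 175*s₃^2 := by nlinarith [mul_nonneg (sub_nonneg.2 hp₃) (sub_nonneg.2 hq₃)]
  refine ⟨40*s₁ - 175*s₁^2, 1 - 41*s₁ + 175*s₁^2,
          40*s₂ - 175*s₂^2, 1 - 41*s₂ + 175*s₂^2,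
          40*s₃ - 175*s₃^2, 1 - 41*s₃ + 175*s₃^2, ?_, ?_, ?_, ?_, ?_, ?_⟩
  · refine ⟨by nlinarith, by nlinarith, by nlinarith,
      by linear_combination s₁ * hf₁,
      by linear_combination s₁ * hf₁, ?_⟩
    simp only [max_le_iff, abs_le]
    refine ⟨⟨by nlinarith, by nlinarith⟩, ⟨by nlinarith, by nlinarith⟩⟩
  · refine ⟨by nlinarith, by nlinarith, by nlinarith,
      by linear_combination s₂ * hf₂,
      by linear_combination s₂ * hf₂, ?_⟩
    simp only [max_le_iff, abs_le]
    refine ⟨⟨by nlinarith, by nlinarith⟩, ⟨by nlinarith, by nlinarith⟩⟩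
  · refine ⟨by nlinarith, by nlinarith, by nlinarith,
      by linear_combination s₃ * hf₃,
      by linear_combination s₃ * hf₃, ?_⟩
    simp only [max_le_iff, abs_le]
    refine ⟨⟨by nlinarith, by nlinarith⟩, ⟨by nlinarith, by nlinarith⟩⟩
  all_goals
    intro h
    have h' := congrArg Prod.fst h
    simp only at h'
    linarith
end

section
/- For the parameter values α = 1.6, γ = 0.04, k_r = 1, β = 3.5: for every (a,b) ∈ ℝ² with |a − 0.13944| ≤ 10⁻³ and |b − 0.63553| ≤ 10⁻³, and also for every (a,b) with |a − 0.97101| ≤ 10⁻³ and |b − 0.00137| ≤ 10⁻³, the Jacobian matrix J(a,b) of the CO-oxidation vector field (with entries J₁₁ = −α − γ − 4b, J₁₂ = −α − 4a, J₂₁ = −4β(1−a−b) − 4b, J₂₂ = −4β(1−a−b) − 4a) has strictly negative trace and strictly positive determinant; hence both eigenvalues of J(a,b) have negative real part, so the outer steady states of Table 4 are linearly stable. -/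
lemma root_neg_re (t d : ℝ) (ht : t < 0) (hd : 0 < d) :
    ∀ μ : ℂ, μ ^ 2 - (t : ℂ) * μ + (d : ℂ) = 0 → μ.re < 0 := by
  intro μ hμ
  have hre : μ.re ^ 2 - μ.im ^ 2 - t * μ.re + d = 0 := by
    have := congrArg Complex.re hμ
    simpa [pow_two, Complex.mul_re, Complex.mul_im, mul_comm] using this
  have him : μ.im * (2 * μ.re - t) = 0 := by
    have := congrArg Complex.im hμ
    simp [pow_two, Complex.mul_re, Complex.mul_im] at this
    ring_nf
    ring_nf at this
    linarith
  rcases mul_eq_zero.mp him with h0 | h0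
  · nlinarith [sq_nonneg μ.re, sq_nonneg (μ.re - t)]
  · nlinarith

/-- For `α = 1.6`, `γ = 0.04`, `k_r = 1`, `β = 3.5`, at every point of the
`1/1000`-boxes around the outer steady states `(0.13944, 0.63553)` and
`(0.97101, 0.00137)`, the Jacobian of the CO-oxidation vector field has
strictly negative trace and strictly positive determinant; hence both
eigenvalues (roots `μ` of `μ² − (tr J) μ + det J = 0`) have negative real part. -/
theorem stmt_11 (a b : ℝ)
    (h : (|a - 0.13944| ≤ 1/1000 ∧ |b - 0.63553| ≤ 1/1000) ∨
         (|a - 0.97101| ≤ 1/1000 ∧ |b - 0.00137| ≤ 1/1000)) :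
    ((-(1.6 : ℝ) - 0.04 - 4 * b) + (-4 * 3.5 * (1 - a - b) - 4 * a)) < 0 ∧
    0 < ((-(1.6 : ℝ) - 0.04 - 4 * b) * (-4 * 3.5 * (1 - a - b) - 4 * a) -
      (-(1.6 : ℝ) - 4 * a) * (-4 * 3.5 * (1 - a - b) - 4 * b)) ∧
    (∀ μ : ℂ,
      μ ^ 2 - ((-(1.6 : ℝ) - 0.04 - 4 * b) + (-4 * 3.5 * (1 - a - b) - 4 * a) : ℝ) * μ +
        (((-(1.6 : ℝ) - 0.04 - 4 * b) * (-4 * 3.5 * (1 - a - b) - 4 * a) -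
          (-(1.6 : ℝ) - 4 * a) * (-4 * 3.5 * (1 - a - b) - 4 * b) : ℝ)) = 0 →
      μ.re < 0) := by
  have ht : ((-(1.6 : ℝ) - 0.04 - 4 * b) + (-4 * 3.5 * (1 - a - b) - 4 * a)) < 0 := by
    rcases h with ⟨ha, hb⟩ | ⟨ha, hb⟩ <;>
      rw [abs_le] at ha hb <;> nlinarith [ha.1, ha.2, hb.1, hb.2]
  have hd : 0 < ((-(1.6 : ℝ) - 0.04 - 4 * b) * (-4 * 3.5 * (1 - a - b) - 4 * a) -
      (-(1.6 : ℝ) - 4 * a) * (-4 * 3.5 * (1 - a - b) - 4 * b)) := by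
    rcases h with ⟨ha, hb⟩ | ⟨ha, hb⟩ <;>
      rw [abs_le] at ha hb <;> nlinarith [ha.1, ha.2, hb.1, hb.2, mul_nonneg (sub_nonneg.2 ha.1) (sub_nonneg.2 hb.1)]
  exact ⟨ht, hd, by exact_mod_cast root_neg_re _ _ ht hd⟩
end
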